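/- For every real r > 1 there exists a constant C_r > 0 such that for every τ ≥ 0 and all a, b, c : ℤ² → [0,∞]: ∑_{(j,k)∈ℤ²×ℤ²} ‖k‖^{r+1/2} ‖j+k‖^{r+1/2} e^{τ‖j‖} e^{τ‖k‖} e^{τ‖j+k‖} a(j) b(k) c(j+k) ≤ C_r · (a(0) + S_{r,τ}(a)) · S_{r+1/2,τ}(b) · S_{r+1/2,τ}(c). -/

import Mathlib

open scoped ENNReal

noncomputable section

/-- Euclidean norm of a lattice point `k ∈ ℤ²` viewed as a vector in `ℝ²`. -/
def nz (k : ℤ × ℤ) : ℝ := Real.sqrt ((k.1 : ℝ) ^ 2 + (k.2 : ℝ) ^ 2)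

/-- The weighted ℓ²-norm `S_{ρ,τ}(a) = (∑_k ‖k‖^{2ρ} e^{2τ‖k‖} a(k)²)^{1/2}`. -/
def S (ρ τ : ℝ) (a : ℤ × ℤ → ℝ≥0∞) : ℝ≥0∞ :=
  (∑' k : ℤ × ℤ, ENNReal.ofReal (nz k ^ (2 * ρ) * Real.exp (2 * τ * nz k)) * (a k) ^ 2)
    ^ ((1 : ℝ) / 2)

/-! Factor the weight as `e^{τ‖j‖} · (‖k‖^{r+1/2} e^{τ‖k‖}) · (‖j+k‖^{r+1/2} e^{τ‖j+k‖})`.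
For fixed `j`, Cauchy–Schwarz in `k` and translation invariance of the `ℓ²` norm bound the sum
over `k` by `S_{r+1/2,τ}(b) S_{r+1/2,τ}(c)`. The remaining sum `∑_j e^{τ‖j‖} a(j)` is `a(0)` plus,
by Cauchy–Schwarz against `‖j‖^{-r}`, at most `(∑_{j ≠ 0} ‖j‖^{-2r})^{1/2} S_{r,τ}(a)`, and this
lattice sum is finite because `2r > 2`. -/

theorem ENNReal.tsum_mul_le_sqrt_mul_sqrt {α : Type*} (f g : α → ℝ≥0∞) :
    ∑' i, f i * g i ≤ (∑' i, f i ^ 2) ^ ((1 : ℝ) / 2) * (∑' i, g i ^ 2) ^ ((1 : ℝ) / 2) := by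
  rw [ENNReal.tsum_eq_iSup_sum]
  refine iSup_le fun s => ?_
  calc ∑ i ∈ s, f i * g i
      ≤ (∑ i ∈ s, f i ^ (2 : ℝ)) ^ (1 / (2 : ℝ)) * (∑ i ∈ s, g i ^ (2 : ℝ)) ^ (1 / (2 : ℝ)) :=
        ENNReal.inner_le_Lp_mul_Lq s f g Real.HolderConjugate.two_two
    _ ≤ _ := by
        simp only [ENNReal.rpow_two]
        gcongr <;> exact ENNReal.sum_le_tsum s

theorem ENNReal.tsum_mul_comp_add_left_le {G : Type*} [AddGroup G] (f g : G → ℝ≥0∞) (j : G) :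
    ∑' k, f k * g (j + k) ≤ (∑' k, f k ^ 2) ^ ((1 : ℝ) / 2) * (∑' k, g k ^ 2) ^ ((1 : ℝ) / 2) := by
  calc ∑' k, f k * g (j + k)
      ≤ (∑' k, f k ^ 2) ^ ((1 : ℝ) / 2) * (∑' k, g (j + k) ^ 2) ^ ((1 : ℝ) / 2) :=
        ENNReal.tsum_mul_le_sqrt_mul_sqrt _ _
    _ = _ := by congr 2; exact (Equiv.addLeft j).tsum_eq (fun m => g m ^ 2)

lemma nz_nonneg (k : ℤ × ℤ) : 0 ≤ nz k := Real.sqrt_nonneg _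

lemma nz_zero : nz 0 = 0 := by simp [nz]

lemma norm_finTwoArrowEquiv_symm_le_nz (k : ℤ × ℤ) : ‖(finTwoArrowEquiv ℤ).symm k‖ ≤ nz k := by
  rw [EisensteinSeries.norm_eq_max_natAbs, Nat.cast_max]
  refine max_le ?_ ?_ <;> simp only [finTwoArrowEquiv_symm_apply, Matrix.cons_val_zero,
    Matrix.cons_val_one, Nat.cast_natAbs, Int.cast_abs] <;> apply Real.abs_le_sqrt <;>
    nlinarith [sq_nonneg (k.1 : ℝ), sq_nonneg (k.2 : ℝ)]

lemma norm_finTwoArrowEquiv_symm_pos {k : ℤ × ℤ} (hk : k ≠ 0) :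
    0 < ‖(finTwoArrowEquiv ℤ).symm k‖ :=
  norm_pos_iff.mpr fun h => hk (by simpa [Prod.mk_zero_zero] using congrArg (finTwoArrowEquiv ℤ) h)

lemma nz_pos {k : ℤ × ℤ} (hk : k ≠ 0) : 0 < nz k :=
  (norm_finTwoArrowEquiv_symm_pos hk).trans_le (norm_finTwoArrowEquiv_symm_le_nz k)

lemma summable_nz_rpow_neg {s : ℝ} (hs : 2 < s) : Summable fun k => nz k ^ (-s) := by
  refine ((finTwoArrowEquiv ℤ).symm.summable_iff.mpr
    (EisensteinSeries.summable_one_div_norm_rpow hs)).of_nonneg_of_le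
    (fun k => Real.rpow_nonneg (nz_nonneg k) _) fun k => ?_
  rcases eq_or_ne k 0 with rfl | hk
  · rw [nz_zero, Real.zero_rpow (by linarith)]
    exact Real.rpow_nonneg (norm_nonneg _) _
  · exact Real.rpow_le_rpow_of_nonpos
      (norm_finTwoArrowEquiv_symm_pos hk) (norm_finTwoArrowEquiv_symm_le_nz k) (by linarith)

lemma tsum_ofReal_nz_rpow_neg_sq_lt_top {r : ℝ} (hr : 1 < r) :
    ∑' k, ENNReal.ofReal (nz k ^ (-r)) ^ 2 < ⊤ := by
  have hsq (k : ℤ × ℤ) : ENNReal.ofReal (nz k ^ (-r)) ^ 2 = ENNReal.ofReal (nz k ^ (-(2 * r))) := by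
    rw [← ENNReal.ofReal_pow (Real.rpow_nonneg (nz_nonneg k) _), ← Real.rpow_mul_natCast
      (nz_nonneg k)]
    ring_nf
  simp only [hsq]
  rw [← ENNReal.ofReal_tsum_of_nonneg (fun k => Real.rpow_nonneg (nz_nonneg k) _)
    (summable_nz_rpow_neg (by linarith))]
  exact ENNReal.ofReal_lt_top

def weight (ρ τ : ℝ) (k : ℤ × ℤ) : ℝ≥0∞ := ENNReal.ofReal (nz k ^ ρ * Real.exp (τ * nz k))

lemma weight_sq (ρ τ : ℝ) (k : ℤ × ℤ) :
    weight ρ τ k ^ 2 = ENNReal.ofReal (nz k ^ (2 * ρ) * Real.exp (2 * τ * nz k)) := by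
  rw [weight, ← ENNReal.ofReal_pow
    (mul_nonneg (Real.rpow_nonneg (nz_nonneg k) _) (Real.exp_nonneg _)), mul_pow,
    ← Real.rpow_mul_natCast (nz_nonneg k), ← Real.exp_nat_mul]
  ring_nf

lemma S_eq (ρ τ : ℝ) (a : ℤ × ℤ → ℝ≥0∞) :
    S ρ τ a = (∑' k, (weight ρ τ k * a k) ^ 2) ^ ((1 : ℝ) / 2) := by
  simp only [S, mul_pow, weight_sq]

lemma weight_zero_apply_zero (τ : ℝ) : weight 0 τ 0 = 1 := by simp [weight, nz_zero]

lemma weight_add_of_ne_zero (ρ σ τ : ℝ) {k : ℤ × ℤ} (hk : k ≠ 0) :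
    weight (ρ + σ) τ k = ENNReal.ofReal (nz k ^ ρ) * weight σ τ k := by
  rw [weight, weight, ← ENNReal.ofReal_mul (Real.rpow_nonneg (nz_nonneg k) _),
    Real.rpow_add (nz_pos hk), mul_assoc]

lemma tsum_weight_zero_mul_le (r τ : ℝ) (a : ℤ × ℤ → ℝ≥0∞) :
    ∑' j, weight 0 τ j * a j
      ≤ a 0 + (∑' k, ENNReal.ofReal (nz k ^ (-r)) ^ 2) ^ ((1 : ℝ) / 2) * S r τ a := by
  rw [ENNReal.tsum_eq_add_tsum_ite 0, weight_zero_apply_zero, one_mul, S_eq]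
  gcongr
  calc _ ≤ ∑' j, ENNReal.ofReal (nz j ^ (-r)) * (weight r τ j * a j) := by
        refine ENNReal.tsum_le_tsum fun j => ?_
        split_ifs with hj
        · exact zero_le
        · rw [← neg_add_cancel r, weight_add_of_ne_zero _ _ _ hj, mul_assoc]
    _ ≤ _ := ENNReal.tsum_mul_le_sqrt_mul_sqrt _ _

lemma ofReal_trilinear_weight_eq (ρ τ : ℝ) (j k : ℤ × ℤ) :
    ENNReal.ofReal (nz k ^ ρ * nz (j + k) ^ ρ * Real.exp (τ * nz j) * Real.exp (τ * nz k)
        * Real.exp (τ * nz (j + k)))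
      = weight 0 τ j * (weight ρ τ k * weight ρ τ (j + k)) := by
  have hw (σ : ℝ) (m : ℤ × ℤ) : 0 ≤ nz m ^ σ * Real.exp (τ * nz m) :=
    mul_nonneg (Real.rpow_nonneg (nz_nonneg m) _) (Real.exp_nonneg _)
  rw [weight, weight, weight, ← ENNReal.ofReal_mul (hw ρ k), ← ENNReal.ofReal_mul (hw 0 j),
    Real.rpow_zero]
  ring_nf

theorem trilinear_A4_term :
    ∀ r : ℝ, 1 < r → ∃ C : ℝ, 0 < C ∧ ∀ τ : ℝ, 0 ≤ τ → ∀ a b c : ℤ × ℤ → ℝ≥0∞,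
      (∑' p : (ℤ × ℤ) × (ℤ × ℤ),
          ENNReal.ofReal (nz p.2 ^ (r + 1 / 2) * nz (p.1 + p.2) ^ (r + 1 / 2)
              * Real.exp (τ * nz p.1) * Real.exp (τ * nz p.2)
              * Real.exp (τ * nz (p.1 + p.2)))
            * a p.1 * b p.2 * c (p.1 + p.2))
        ≤ ENNReal.ofReal C * (a 0 + S r τ a) * S (r + 1 / 2) τ b * S (r + 1 / 2) τ c := by
  intro r hr
  set K := (∑' k, ENNReal.ofReal (nz k ^ (-r)) ^ 2) ^ ((1 : ℝ) / 2)
  have hK : K ≠ ⊤ :=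
    (ENNReal.rpow_lt_top_of_nonneg (by norm_num) (tsum_ofReal_nz_rpow_neg_sq_lt_top hr).ne).ne
  refine ⟨K.toReal + 1, by positivity, fun τ _ a b c => ?_⟩
  set ρ := r + 1 / 2
  calc _ = ∑' j, weight 0 τ j * a j
          * ∑' k, (weight ρ τ k * b k) * (weight ρ τ (j + k) * c (j + k)) := by
        rw [ENNReal.tsum_prod']
        refine tsum_congr fun j => ?_
        rw [← ENNReal.tsum_mul_left]
        refine tsum_congr fun k => ?_
        rw [ofReal_trilinear_weight_eq]
        ring
    _ ≤ ∑' j, weight 0 τ j * a j * (S ρ τ b * S ρ τ c) := by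
        gcongr with j
        rw [S_eq, S_eq]
        exact ENNReal.tsum_mul_comp_add_left_le (weight ρ τ * b) (weight ρ τ * c) j
    _ = (∑' j, weight 0 τ j * a j) * (S ρ τ b * S ρ τ c) := ENNReal.tsum_mul_right
    _ ≤ (a 0 + K * S r τ a) * (S ρ τ b * S ρ τ c) := by gcongr; exact tsum_weight_zero_mul_le r τ a
    _ ≤ (K + 1) * (a 0 + S r τ a) * (S ρ τ b * S ρ τ c) := by
        gcongr
        rw [mul_add]
        gcongr
        · exact le_mul_of_one_le_left' le_add_self
        · exact le_self_add
    _ = _ := by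
        rw [ENNReal.ofReal_add ENNReal.toReal_nonneg zero_le_one, ENNReal.ofReal_toReal hK,
          ENNReal.ofReal_one]
        ring
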